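/- Let n be a positive integer and let A = (a_{ij}) be an n × n complex matrix all of whose diagonal entries are nonzero. Then there exist complex constants C_1, ..., C_n such that for every column index k, the weighted column sum Σ_i C_i · a_{ik} is nonzero. -/
import Mathlib


/-- Let `A` be an `n × n` complex matrix with nonzero diagonal entries. Then there exist
constants `C₁, …, Cₙ` such that every weighted column sum `∑ i, Cᵢ * A i k` is nonzero. -/
theorem stmt_5 (n : ℕ) (hn : 0 < n) (A : Matrix (Fin n) (Fin n) ℂ)
    (hA : ∀ i, A i i ≠ 0) :
    ∃ C : Fin n → ℂ, ∀ k, (∑ i, C i * A i k) ≠ 0 := by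
  -- column polynomials
  set p : Fin n → Polynomial ℂ := fun k => ∑ i : Fin n, Polynomial.monomial (i : ℕ) (A i k) with hp
  have hpne : ∀ k, p k ≠ 0 := by
    intro k hk
    have hc : (p k).coeff k = A k k := by
      simp only [hp, Polynomial.finset_sum_coeff, Polynomial.coeff_monomial]
      rw [Finset.sum_eq_single k]
      · simp
      · intro i _ hi
        simp [Fin.val_eq_val, hi]
      · simp
    rw [hk] at hc
    exact hA k (by simpa using hc.symm)
  -- avoid all roots
  obtain ⟨t, ht⟩ := Set.Infinite.exists_notMem_finset
    (Set.infinite_univ (α := ℂ))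
    (Finset.univ.biUnion fun k => (p k).roots.toFinset)
  refine ⟨fun i => t ^ (i : ℕ), fun k hk => ?_⟩
  apply ht.2
  refine Finset.mem_biUnion.2 ⟨k, Finset.mem_univ _, ?_⟩
  rw [Multiset.mem_toFinset, Polynomial.mem_roots (hpne k)]
  have : (p k).eval t = ∑ i : Fin n, t ^ (i : ℕ) * A i k := by
    simp [hp, Polynomial.eval_finset_sum, mul_comm]
  show (p k).eval t = 0
  rw [this]
  exact hk
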